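/- Let R be a commutative Q-algebra and f : ℕ → R[[t]] with t^n dividing f(n) for all n. Then 1 + ∑_{k≥1} ∑_{λ ⊢ k} (-1)^{k - l(λ)} (1/z_λ) ∏_{i=1}^k f(i)^{n_i} = exp(∑_{u≥1} (-1)^{u-1} f(u)/u), where for a partition λ of the integer k with n_i parts equal to i, l(λ) = ∑ n_i and z_λ = ∏_{i=1}^k i^{n_i}·n_i!. -/

import Mathlib

open Finset PowerSeries

/-- The sum `∑_{k≥0} F k` of a family of formal power series such that `t^k ∣ F k`. -/
noncomputable def seriesSum {R : Type*} [CommRing R] (F : ℕ → PowerSeries R) :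
    PowerSeries R :=
  PowerSeries.mk fun d => ∑ k ∈ Finset.range (d + 1), PowerSeries.coeff (R := R) d (F k)

/-- The formal exponential `exp g = ∑_{s≥0} g^s / s!` for `g` with zero constant term. -/
noncomputable def formalExp {R : Type*} [CommRing R] [Algebra ℚ R] (g : PowerSeries R) :
    PowerSeries R :=
  PowerSeries.mk fun d => ∑ s ∈ Finset.range (d + 1),
    PowerSeries.coeff (R := R) d (algebraMap ℚ (PowerSeries R) (1 / (Nat.factorial s : ℚ)) * g ^ s)

/-- `z_λ = ∏_{i=1}^k i^{n_i} · n_i!`, where `n_i` is the number of parts of `λ` equal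
to `i`. -/
def zCoef {k : ℕ} (l : Nat.Partition k) : ℚ :=
  ∏ i ∈ Finset.Icc 1 k, ((i : ℚ) ^ (l.parts.count i) *
    (Nat.factorial (l.parts.count i) : ℚ))

open scoped Nat

/-! Compare coefficients of `t^d`. Modulo `t^(d+1)` the argument of the exponential is the
finite sum `∑_{u ≤ d} x_u` with `x_u = (-1)^(u-1) f(u) / u`, and the multinomial theorem expands
`(∑ x_u)^n / n!` as the sum of `∏ x_u^(m_u) / m_u!` over the count vectors `m` with
`∑ m_u = n`. The count vectors of weight `∑ u m_u ≤ d` are exactly the multiplicity vectors of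
the partitions `λ ⊢ k ≤ d`, for which `∏ x_u^(n_u) / n_u! = (-1)^(k - l(λ)) / z_λ ∏ f(u)^(n_u)`;
the terms of the other count vectors are divisible by `t^(d+1)`. -/

theorem pow_sum_mul_dvd_prod {M : Type*} [CommMonoid M] (s : Finset ℕ) {a : M} {x : ℕ → M}
    (hx : ∀ i ∈ s, a ^ i ∣ x i) (c : ℕ → M) (m : ℕ → ℕ) :
    a ^ (∑ i ∈ s, m i * i) ∣ ∏ i ∈ s, c i * x i ^ m i := by
  rw [← prod_pow_eq_pow_sum]
  refine prod_dvd_prod_of_dvd _ _ fun i hi => Dvd.dvd.mul_left ?_ _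
  rw [mul_comm, pow_mul]
  exact pow_dvd_pow_of_dvd (hx i hi) _

theorem inv_factorial_mul_sum_pow {ι A : Type*} [CommRing A] [Algebra ℚ A] [DecidableEq ι]
    (s : Finset ι) (x : ι → A) (n : ℕ) :
    algebraMap ℚ A (1 / (n ! : ℚ)) * (∑ i ∈ s, x i) ^ n =
      ∑ m ∈ s.piAntidiag n, ∏ i ∈ s, algebraMap ℚ A (1 / ((m i)! : ℚ)) * x i ^ m i := by
  rw [sum_pow_eq_sum_piAntidiag, mul_sum]
  refine sum_congr rfl fun m hm => ?_
  have hspec : (∏ i ∈ s, ((m i)! : ℚ)) * Nat.multinomial s m = n ! := by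
    rw [← (mem_piAntidiag.mp hm).1]
    exact_mod_cast Nat.multinomial_spec s m
  have hcoeff : 1 / (n ! : ℚ) * Nat.multinomial s m = ∏ i ∈ s, 1 / ((m i)! : ℚ) := by
    rw [← hspec, prod_div_distrib, prod_const_one]
    have : (Nat.multinomial s m : ℚ) ≠ 0 := by exact_mod_cast (Nat.multinomial_pos s m).ne'
    have : ∏ i ∈ s, ((m i)! : ℚ) ≠ 0 := prod_ne_zero_iff.mpr fun i _ => by positivity
    field_simp
  rw [prod_mul_distrib, ← map_prod, ← hcoeff, map_mul, map_natCast, mul_assoc]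

namespace Nat.Partition

theorem sigma_eq_of_parts_eq {k k' : ℕ} {p : k.Partition} {p' : k'.Partition}
    (h : p.parts = p'.parts) : (⟨k, p⟩ : Σ n, n.Partition) = ⟨k', p'⟩ := by
  obtain rfl : k = k' := by rw [← p.parts_sum, ← p'.parts_sum, h]
  rw [Nat.Partition.ext h]

variable {k d : ℕ}

theorem mem_Icc_of_mem_parts (p : k.Partition) (hkd : k ≤ d) {i : ℕ} (hi : i ∈ p.parts) :
    i ∈ Icc 1 d :=
  mem_Icc.mpr ⟨p.parts_pos hi, (le_of_mem_parts hi).trans hkd⟩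

theorem count_eq_zero_of_notMem_Icc (p : k.Partition) {i : ℕ} (hi : i ∉ Icc 1 k) :
    p.parts.count i = 0 :=
  Multiset.count_eq_zero.mpr fun hp => hi (p.mem_Icc_of_mem_parts le_rfl hp)

theorem sum_count_mul_eq (p : k.Partition) (hkd : k ≤ d) :
    ∑ i ∈ Icc 1 d, p.parts.count i * i = k := by
  simpa using (sum_multiset_count_of_subset _ _ fun i hi =>
    p.mem_Icc_of_mem_parts hkd (Multiset.mem_toFinset.mp hi)).symm.trans p.parts_sum

theorem sum_count_eq_card (p : k.Partition) (hkd : k ≤ d) :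
    ∑ i ∈ Icc 1 d, p.parts.count i = Multiset.card p.parts :=
  Multiset.sum_count_eq_card fun _ hi => p.mem_Icc_of_mem_parts hkd hi

theorem card_parts_le (p : k.Partition) : Multiset.card p.parts ≤ k := by
  simpa [p.parts_sum] using Multiset.card_nsmul_le_sum fun _ hi => p.parts_pos hi

theorem zCoef_eq_prod_Icc (p : k.Partition) (hkd : k ≤ d) :
    zCoef p = ∏ i ∈ Icc 1 d, ((i : ℚ) ^ p.parts.count i * ((p.parts.count i)! : ℚ)) := by
  refine prod_subset (Icc_subset_Icc_right hkd) fun i _ hi => ?_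
  simp [p.count_eq_zero_of_notMem_Icc hi]

theorem sum_sub_one_mul_count (p : k.Partition) (hkd : k ≤ d) :
    ∑ i ∈ Icc 1 d, (i - 1) * p.parts.count i = k - Multiset.card p.parts := by
  have h : ∑ i ∈ Icc 1 d, (i - 1) * p.parts.count i + Multiset.card p.parts = k := by
    rw [← p.sum_count_eq_card hkd, ← sum_add_distrib]
    refine (sum_congr rfl fun i hi => ?_).trans (p.sum_count_mul_eq hkd)
    obtain ⟨j, rfl⟩ := Nat.exists_eq_add_of_le' (mem_Icc.mp hi).1
    simp only [Nat.add_sub_cancel]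
    ring
  omega

theorem sign_div_zCoef_eq_prod (p : k.Partition) (hkd : k ≤ d) :
    (-1 : ℚ) ^ (k - Multiset.card p.parts) / zCoef p =
      ∏ i ∈ Icc 1 d,
        1 / ((p.parts.count i)! : ℚ) * ((-1 : ℚ) ^ (i - 1) / i) ^ p.parts.count i := by
  rw [p.zCoef_eq_prod_Icc hkd, ← p.sum_sub_one_mul_count hkd, ← prod_pow_eq_pow_sum,
    ← prod_div_distrib]
  refine prod_congr rfl fun i _ => ?_
  rw [div_pow, ← pow_mul]
  ring

theorem algebraMap_sign_div_zCoef_mul_prod {A : Type*} [CommRing A] [Algebra ℚ A]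
    (f : ℕ → A) (p : k.Partition) (hkd : k ≤ d) :
    algebraMap ℚ A ((-1 : ℚ) ^ (k - Multiset.card p.parts) / zCoef p) *
        ∏ i ∈ Icc 1 k, f i ^ p.parts.count i =
      ∏ i ∈ Icc 1 d, algebraMap ℚ A (1 / ((p.parts.count i)! : ℚ)) *
        (algebraMap ℚ A ((-1 : ℚ) ^ (i - 1) / i) * f i) ^ p.parts.count i := by
  have hf :
      ∏ i ∈ Icc 1 k, f i ^ p.parts.count i = ∏ i ∈ Icc 1 d, f i ^ p.parts.count i := by
    refine prod_subset (Icc_subset_Icc_right hkd) fun i _ hi => ?_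
    rw [p.count_eq_zero_of_notMem_Icc hi, pow_zero]
  rw [p.sign_div_zCoef_eq_prod hkd, hf, map_prod, ← prod_mul_distrib]
  refine prod_congr rfl fun i _ => ?_
  rw [mul_pow, ← map_pow, map_mul]
  ring

end Nat.Partition

theorem sum_partitions_eq_sum_piAntidiag {M : Type*} [AddCommMonoid M] (d : ℕ)
    (T : (ℕ → ℕ) → M) (hT : ∀ m, d < ∑ i ∈ Icc 1 d, m i * i → T m = 0) :
    ∑ k ∈ range (d + 1), ∑ p : k.Partition, T (fun i => p.parts.count i) =
      ∑ n ∈ range (d + 1), ∑ m ∈ (Icc 1 d).piAntidiag n, T m := by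
  rw [sum_sigma', sum_sigma']
  refine sum_of_injOn (fun x => ⟨Multiset.card x.2.parts, fun i => x.2.parts.count i⟩)
    ?_ ?_ ?_ fun _ _ => rfl
  · rintro ⟨k, p⟩ - ⟨k', p'⟩ - h
    simp only [Sigma.mk.injEq, heq_eq_eq] at h
    exact Nat.Partition.sigma_eq_of_parts_eq (Multiset.count_injective h.2)
  · rintro ⟨k, p⟩ hp
    have hkd : k ≤ d := Nat.lt_succ_iff.mp (mem_range.mp (mem_sigma.mp hp).1)
    simp only [coe_sigma, Set.mem_sigma_iff, coe_range, Set.mem_Iio, mem_coe, mem_piAntidiag]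
    refine ⟨(p.card_parts_le.trans hkd).trans_lt (Nat.lt_succ_self d),
      p.sum_count_eq_card hkd, fun i hi => p.mem_Icc_of_mem_parts hkd ?_⟩
    exact Multiset.count_ne_zero.mp hi
  · rintro ⟨n, m⟩ hm hm_not
    refine hT m (not_le.mp fun hle => hm_not ?_)
    obtain ⟨-, hm⟩ := mem_sigma.mp hm
    dsimp only at hm
    rw [← map_sym_eq_piAntidiag, mem_map] at hm
    obtain ⟨μ, hμ, rfl⟩ := hm
    have hsum : (μ : Multiset ℕ).sum = ∑ i ∈ Icc 1 d, (μ : Multiset ℕ).count i * i :=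
      sum_multiset_count_of_subset _ _ fun i hi =>
        mem_sym_iff.mp hμ i (Multiset.mem_toFinset.mp hi)
    refine ⟨⟨_, ⟨μ, fun hi => (mem_Icc.mp (mem_sym_iff.mp hμ _ hi)).1, rfl⟩⟩, ?_, ?_⟩
    · simpa [hsum] using hle
    · simp

section PowerSeries

variable {R : Type*} [CommRing R]

theorem PowerSeries.coeff_eq_of_X_pow_dvd_sub {a b : R⟦X⟧} {n d : ℕ} (h : X ^ n ∣ a - b)
    (hd : d < n) : coeff d a = coeff d b := by
  rw [← sub_eq_zero, ← map_sub]
  exact X_pow_dvd_iff.mp h d hd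

theorem coeff_seriesSum (F : ℕ → R⟦X⟧) (d : ℕ) :
    coeff d (seriesSum F) = coeff d (∑ k ∈ range (d + 1), F k) := by
  rw [seriesSum, coeff_mk, map_sum]

theorem one_add_seriesSum_ite {F : ℕ → R⟦X⟧} (hF : F 0 = 1) :
    1 + seriesSum (fun k => if k = 0 then 0 else F k) = seriesSum F := by
  ext d
  simp only [map_add, coeff_seriesSum, sum_range_succ', if_pos, add_zero, Nat.succ_ne_zero,
    if_false, hF]
  ring

theorem X_pow_dvd_seriesSum_sub {F : ℕ → R⟦X⟧} (hF : ∀ k, X ^ k ∣ F k) (N : ℕ) :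
    X ^ N ∣ seriesSum F - ∑ k ∈ range N, F k := by
  refine X_pow_dvd_iff.mpr fun d hd => ?_
  rw [map_sub, coeff_seriesSum, sub_eq_zero, map_sum, map_sum]
  refine sum_subset (range_subset_range.mpr hd) fun k hkN hkd => ?_
  exact X_pow_dvd_iff.mp (hF k) d (by simpa using hkd)

variable [Algebra ℚ R]

theorem coeff_formalExp_of_X_pow_dvd_sub {g h : R⟦X⟧} {d : ℕ} (hgh : X ^ (d + 1) ∣ g - h) :
    coeff d (formalExp g) =
      coeff d (∑ n ∈ range (d + 1), algebraMap ℚ R⟦X⟧ (1 / (n ! : ℚ)) * h ^ n) := by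
  rw [formalExp, coeff_mk, map_sum]
  refine sum_congr rfl fun n _ => coeff_eq_of_X_pow_dvd_sub ?_ (Nat.lt_succ_self d)
  rw [← mul_sub]
  exact (hgh.trans (sub_dvd_pow_sub_pow g h n)).mul_left _

end PowerSeries

theorem generating_series_number_partitions (R : Type*) [CommRing R] [Algebra ℚ R]
    (f : ℕ → PowerSeries R) (hf : ∀ n, 1 ≤ n → (PowerSeries.X : PowerSeries R) ^ n ∣ f n) :
    1 + seriesSum (fun k =>
        if k = 0 then 0 else
          ∑ l : Nat.Partition k,
            algebraMap ℚ (PowerSeries R) ((-1 : ℚ) ^ (k - l.parts.card) / zCoef l) *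
              ∏ i ∈ Finset.Icc 1 k, f i ^ (l.parts.count i))
      = formalExp (seriesSum (fun u =>
          if u = 0 then 0 else
            algebraMap ℚ (PowerSeries R) ((-1 : ℚ) ^ (u - 1) / (u : ℚ)) * f u)) := by
  set x : ℕ → R⟦X⟧ := fun u => algebraMap ℚ R⟦X⟧ ((-1 : ℚ) ^ (u - 1) / (u : ℚ)) * f u
  have hx : ∀ u, 1 ≤ u → X ^ u ∣ x u := fun u hu => (hf u hu).mul_left _
  ext d
  have hrange : ∑ u ∈ range (d + 1), (if u = 0 then 0 else x u) = ∑ u ∈ Icc 1 d, x u := by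
    rw [range_eq_Ico, sum_eq_sum_Ico_succ_bot (Nat.succ_pos d), if_pos rfl, zero_add]
    exact sum_congr rfl fun u hu => if_neg (Nat.one_le_iff_ne_zero.mp (mem_Ico.mp hu).1)
  have htrunc :
      X ^ (d + 1) ∣ seriesSum (fun u => if u = 0 then 0 else x u) - ∑ u ∈ Icc 1 d, x u := by
    rw [← hrange]
    refine X_pow_dvd_seriesSum_sub (fun u => ?_) (d + 1)
    split_ifs with hu
    · exact dvd_zero _
    · exact hx u (Nat.one_le_iff_ne_zero.mpr hu)
  rw [one_add_seriesSum_ite (by simp [zCoef]), coeff_seriesSum,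
    coeff_formalExp_of_X_pow_dvd_sub htrunc]
  simp_rw [inv_factorial_mul_sum_pow, map_sum]
  rw [← sum_partitions_eq_sum_piAntidiag d _ fun m hm => X_pow_dvd_iff.mp
    (pow_sum_mul_dvd_prod (Icc 1 d) (fun u hu => hx u (mem_Icc.mp hu).1) _ m) d hm]
  refine sum_congr rfl fun k hk => sum_congr rfl fun p _ => ?_
  rw [p.algebraMap_sign_div_zCoef_mul_prod f (Nat.lt_succ_iff.mp (mem_range.mp hk))]
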